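/- arXiv:1112.3073 — 4 statements merged into one kernel-verified Lean document; each statement's English description precedes it below -/
import Mathlib

section
/- Let K be a convex body in R^n containing 0 in its interior. Define A(t) = t·log N(K, t B_2^n) and B(t) = t·log N(B_2^n, t K°) for t > 0, where K° is the polar body of K. Then sup_{t>0} B(t) ≤ 16·sup_{t>0} A(t). -/
open MeasureTheory Set
open scoped Pointwise RealInnerProductSpace

/-- Covering number: the least `N` such that `A` is covered by `N` translates of `B`. -/
noncomputable def covN {n : ℕ} (A B : Set (EuclideanSpace ℝ (Fin n))) : ℕ :=
  sInf {N : ℕ | ∃ F : Finset (EuclideanSpace ℝ (Fin n)), F.card = N ∧ A ⊆ ⋃ c ∈ F, c +ᵥ B}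

/-- The polar body `K° = {y : ⟨x,y⟩ ≤ 1 for all x ∈ K}`. -/
def polarBody {n : ℕ} (K : Set (EuclideanSpace ℝ (Fin n))) : Set (EuclideanSpace ℝ (Fin n)) :=
  {y | ∀ x ∈ K, ⟪x, y⟫ ≤ 1}

/-!
Separating a point of the unit ball `B₂ⁿ` from the compact convex set `K + K°` shows
`B₂ⁿ ⊆ K + K°`. Applied to `(2/t) K`, whose polar is `(t/2) K°`, this gives
`B₂ⁿ ⊆ (2/t) K + (t/2) K°`; as `(t/2) K° + (t/2) K° = t K°`, every cover of `(2/t) K` by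
translates of `(t/2) K°` is a cover of `B₂ⁿ` by translates of `t K°`. Covering `(2/t) K` by
balls of radius `1/4` and each such ball by translates of `(t/2) K°`, and rescaling, gives
`N(B₂ⁿ, t K°) ≤ N(K, (t/8) B₂ⁿ) · N(B₂ⁿ, 2t K°)`, that is `B(t) ≤ 8 A(t/8) + B(2t)/2`.
Taking suprema, `sup B ≤ 8 sup A + (sup B)/2`.
-/

open Filter Topology

section

variable {n : ℕ}
local notation "E" => EuclideanSpace ℝ (Fin n)

def HasCover (A B : Set E) : Prop :=
  ∃ F : Finset E, A ⊆ ⋃ c ∈ F, c +ᵥ B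

lemma covN_le_card {A B : Set E} {F : Finset E} (h : A ⊆ ⋃ c ∈ F, c +ᵥ B) :
    covN A B ≤ F.card :=
  Nat.sInf_le ⟨F, rfl, h⟩

lemma HasCover.exists_card_eq_covN {A B : Set E} (h : HasCover A B) :
    ∃ F : Finset E, F.card = covN A B ∧ A ⊆ ⋃ c ∈ F, c +ᵥ B :=
  let ⟨F, hF⟩ := h
  Nat.sInf_mem (s := {N | ∃ F : Finset E, F.card = N ∧ A ⊆ ⋃ c ∈ F, c +ᵥ B}) ⟨F.card, F, rfl, hF⟩

lemma hasCover_of_isCompact {A B : Set E} (hA : IsCompact A) (hB : B ∈ 𝓝 0) :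
    HasCover A B :=
  let ⟨F, _, hF⟩ := hA.elim_nhds_subcover (· +ᵥ B) fun _ _ => vadd_mem_nhds_self.2 hB
  ⟨F, hF⟩

lemma covN_pos {A B : Set E} (hA : A.Nonempty) (h : HasCover A B) : 0 < covN A B := by
  obtain ⟨F, hF, hAF⟩ := h.exists_card_eq_covN
  obtain ⟨a, ha⟩ := hA
  obtain ⟨c, hc, -⟩ := mem_iUnion₂.1 (hAF ha)
  exact hF ▸ Finset.card_pos.2 ⟨c, hc⟩

lemma exists_card_eq_smul_cover {r : ℝ} (hr : r ≠ 0) {A B : Set E} {F : Finset E}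
    (h : A ⊆ ⋃ c ∈ F, c +ᵥ B) :
    ∃ G : Finset E, G.card = F.card ∧ r • A ⊆ ⋃ c ∈ G, c +ᵥ r • B := by
  classical
  refine ⟨F.image (r • ·), F.card_image_of_injective (smul_right_injective E hr), ?_⟩
  rintro _ ⟨a, ha, rfl⟩
  obtain ⟨c, hc, b, hb, rfl⟩ := mem_iUnion₂.1 (h ha)
  exact mem_iUnion₂.2 ⟨r • c, Finset.mem_image_of_mem _ hc, r • b, smul_mem_smul_set hb,
    (smul_add r c b).symm⟩

lemma covN_smul {r : ℝ} (hr : r ≠ 0) (A B : Set E) : covN (r • A) (r • B) = covN A B := by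
  unfold covN
  congr 1
  ext N
  constructor
  · rintro ⟨F, rfl, hF⟩
    obtain ⟨G, hG, hcover⟩ := exists_card_eq_smul_cover (inv_ne_zero hr) hF
    exact ⟨G, hG, by simpa only [inv_smul_smul₀ hr] using hcover⟩
  · rintro ⟨F, rfl, hF⟩
    exact exists_card_eq_smul_cover hr hF

lemma HasCover.covN_le_mul {A B C : Set E} (hAB : HasCover A B) (hBC : HasCover B C) :
    covN A C ≤ covN A B * covN B C := by
  classical
  obtain ⟨F, hF, hAF⟩ := hAB.exists_card_eq_covN
  obtain ⟨G, hG, hBG⟩ := hBC.exists_card_eq_covN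
  have hcover : A ⊆ ⋃ c ∈ F + G, c +ᵥ C := by
    intro a ha
    obtain ⟨f, hf, b, hb, rfl⟩ := mem_iUnion₂.1 (hAF ha)
    obtain ⟨g, hg, c, hc, rfl⟩ := mem_iUnion₂.1 (hBG hb)
    exact mem_iUnion₂.2 ⟨f + g, Finset.add_mem_add hf hg, c, hc, (vadd_vadd f g c).symm⟩
  calc covN A C ≤ (F + G).card := covN_le_card hcover
    _ ≤ F.card * G.card := Finset.card_add_le
    _ = covN A B * covN B C := by rw [hF, hG]

lemma covN_le_of_subset_add {A D B C : Set E} (hA : A ⊆ D + B) (hB : B + B ⊆ C)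
    (hDB : HasCover D B) : covN A C ≤ covN D B := by
  obtain ⟨F, hF, hDF⟩ := hDB.exists_card_eq_covN
  refine hF ▸ covN_le_card fun a ha => ?_
  obtain ⟨d, hd, b, hb, rfl⟩ := hA ha
  obtain ⟨f, hf, b', hb', rfl⟩ := mem_iUnion₂.1 (hDF hd)
  exact mem_iUnion₂.2 ⟨f, hf, b' + b, hB ⟨b', hb', b, hb, rfl⟩, vadd_vadd f b' b⟩


lemma polarBody_eq_biInter (K : Set E) : polarBody K = ⋂ x ∈ K, {y | ⟪x, y⟫ ≤ 1} := by
  ext y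
  simp [polarBody]

lemma convex_polarBody (K : Set E) : Convex ℝ (polarBody K) := by
  rw [polarBody_eq_biInter]
  exact convex_iInter₂ fun x _ => convex_halfSpace_le (innerₛₗ ℝ x).isLinear 1

lemma isClosed_polarBody (K : Set E) : IsClosed (polarBody K) := by
  rw [polarBody_eq_biInter]
  exact isClosed_biInter fun x _ => isClosed_le (continuous_const.inner continuous_id)
    continuous_const

lemma zero_mem_polarBody (K : Set E) : (0 : E) ∈ polarBody K := by
  simp [polarBody]

lemma polarBody_smul (K : Set E) {r : ℝ} (hr : r ≠ 0) :
    polarBody (r • K) = r⁻¹ • polarBody K := by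
  ext y
  rw [mem_inv_smul_set_iff₀ hr]
  simp [polarBody, ← image_smul, real_inner_smul_left, real_inner_smul_right]

lemma polarBody_mem_nhds_zero {K : Set E} (hK : Bornology.IsBounded K) :
    polarBody K ∈ 𝓝 0 := by
  obtain ⟨R, hR, hKR⟩ := hK.subset_closedBall_lt 0 0
  refine Filter.mem_of_superset (Metric.closedBall_mem_nhds 0 (inv_pos.2 hR)) fun y hy x hx => ?_
  have hx : ‖x‖ ≤ R := by simpa using hKR hx
  have hy : ‖y‖ ≤ R⁻¹ := by simpa using hy
  calc ⟪x, y⟫ ≤ ‖x‖ * ‖y‖ := real_inner_le_norm x y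
    _ ≤ R * R⁻¹ := mul_le_mul hx hy (norm_nonneg y) hR.le
    _ = 1 := mul_inv_cancel₀ hR.ne'

lemma closedBall_subset_add_polarBody {K : Set E} (hconv : Convex ℝ K) (hcomp : IsCompact K)
    (h0 : (0 : E) ∈ K) : Metric.closedBall (0 : E) 1 ⊆ K + polarBody K := by
  intro x hx
  by_contra hxS
  obtain ⟨f, u, hfS, hux⟩ := geometric_hahn_banach_closed_point
    (hconv.add (convex_polarBody K)) ((isClosed_polarBody K).add_left_of_isCompact hcomp) hxS
  have hu : 0 < u := by simpa using hfS 0 ⟨0, h0, 0, zero_mem_polarBody K, add_zero 0⟩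
  -- The normalised separating vector `w` lies in `K° ⊆ K + K°`, which forces `‖w‖ < 1`,
  -- contradicting `⟪w, x⟫ > 1`.
  obtain ⟨w, hw⟩ : ∃ w : E, ∀ y, ⟪w, y⟫ = u⁻¹ * f y :=
    ⟨(InnerProductSpace.toDual ℝ E).symm (u⁻¹ • f), fun y => by simp [real_inner_smul_left]⟩
  have hwS : ∀ z ∈ K + polarBody K, ⟪w, z⟫ < 1 := fun z hz => by
    rw [hw, inv_mul_lt_iff₀ hu, mul_one]
    exact hfS z hz
  have hwK : w ∈ polarBody K := fun z hz => by
    rw [real_inner_comm]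
    exact (hwS z ⟨z, hz, 0, zero_mem_polarBody K, add_zero z⟩).le
  have hw1 : ‖w‖ < 1 := by
    have := hwS w ⟨0, h0, w, hwK, zero_add w⟩
    rwa [real_inner_self_eq_norm_sq, sq_lt_one_iff₀ (norm_nonneg w)] at this
  have hwx : 1 < ⟪w, x⟫ := by
    rw [hw, lt_inv_mul_iff₀ hu, mul_one]
    exact hux
  have hx1 : ‖x‖ ≤ 1 := mem_closedBall_zero_iff.1 hx
  have := (real_inner_le_norm w x).trans (mul_le_of_le_one_right (norm_nonneg w) hx1)
  linarith

lemma covN_closedBall_polarBody_le {K : Set E} (hconv : Convex ℝ K) (hcomp : IsCompact K)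
    (h0 : (0 : E) ∈ K) {t : ℝ} (ht : 0 < t) :
    covN (Metric.closedBall 0 1) (t • polarBody K) ≤
      covN K ((t / 8) • Metric.closedBall 0 1) *
        covN (Metric.closedBall 0 1) ((2 * t) • polarBody K) := by
  set ball : Set E := Metric.closedBall 0 1
  have hball : IsCompact ball := isCompact_closedBall 0 1
  have hball_nhds {r : ℝ} (hr : r ≠ 0) : r • ball ∈ 𝓝 0 :=
    (set_smul_mem_nhds_zero_iff hr).2 (Metric.closedBall_mem_nhds 0 one_pos)
  have hpolar_nhds {r : ℝ} (hr : r ≠ 0) : r • polarBody K ∈ 𝓝 0 :=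
    (set_smul_mem_nhds_zero_iff hr).2 (polarBody_mem_nhds_zero hcomp.isBounded)
  have hsub : ball ⊆ (2 / t) • K + (t / 2) • polarBody K := by
    have := closedBall_subset_add_polarBody (hconv.smul (2 / t)) (hcomp.smul (2 / t))
      ⟨0, h0, smul_zero _⟩
    rwa [polarBody_smul K (by positivity), inv_div] at this
  have hhalves : (t / 2) • polarBody K + (t / 2) • polarBody K = t • polarBody K := by
    rw [← (convex_polarBody K).add_smul (by positivity) (by positivity), add_halves]
  have hquarter : (1 / 4 : ℝ) • ball = (2 / t) • ((t / 8) • ball) := by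
    rw [smul_smul]
    congr 1
    field_simp
    norm_num
  have hhalf : (t / 2) • polarBody K = (1 / 4 : ℝ) • ((2 * t) • polarBody K) := by
    rw [smul_smul]
    congr 1
    ring
  calc covN ball (t • polarBody K)
      ≤ covN ((2 / t) • K) ((t / 2) • polarBody K) :=
        covN_le_of_subset_add hsub hhalves.le
          (hasCover_of_isCompact (hcomp.smul _) (hpolar_nhds (by positivity)))
    _ ≤ covN ((2 / t) • K) ((1 / 4 : ℝ) • ball) *
          covN ((1 / 4 : ℝ) • ball) ((t / 2) • polarBody K) :=
        (hasCover_of_isCompact (hcomp.smul _) (hball_nhds (by norm_num))).covN_le_mul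
          (hasCover_of_isCompact (hball.smul _) (hpolar_nhds (by positivity)))
    _ = covN K ((t / 8) • ball) * covN ball ((2 * t) • polarBody K) := by
        rw [hquarter, covN_smul (by positivity), ← hquarter, hhalf,
          covN_smul (by norm_num)]

lemma mul_log_covN_closedBall_polarBody_le {K : Set E} (hconv : Convex ℝ K)
    (hcomp : IsCompact K) (h0 : (0 : E) ∈ K) {t : ℝ} (ht : 0 < t) :
    t * Real.log (covN (Metric.closedBall 0 1) (t • polarBody K)) ≤
      8 * (t / 8 * Real.log (covN K ((t / 8) • Metric.closedBall 0 1))) +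
        2 * t * Real.log (covN (Metric.closedBall 0 1) ((2 * t) • polarBody K)) / 2 := by
  have hle := covN_closedBall_polarBody_le hconv hcomp h0 ht
  have hpos : 0 < covN (Metric.closedBall (0 : E) 1) (t • polarBody K) :=
    covN_pos ⟨0, Metric.mem_closedBall_self zero_le_one⟩ <|
      hasCover_of_isCompact (isCompact_closedBall 0 1)
        ((set_smul_mem_nhds_zero_iff ht.ne').2 (polarBody_mem_nhds_zero hcomp.isBounded))
  obtain ⟨h₁, h₂⟩ := CanonicallyOrderedAdd.mul_pos.1 (hpos.trans_le hle)
  calc t * Real.log (covN (Metric.closedBall 0 1) (t • polarBody K))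
      ≤ t * Real.log ((covN K ((t / 8) • Metric.closedBall 0 1) : ℝ) *
          covN (Metric.closedBall 0 1) ((2 * t) • polarBody K)) := by
        gcongr
        exact_mod_cast hle
    _ = _ := by
        rw [Real.log_mul (by positivity) (by positivity)]
        ring

end

lemma sSup_image_Ioi_le_of_le_add_half {f g : ℝ → ℝ} {a : ℝ} (ha : 0 < a)
    (hg : BddAbove (g '' Ioi 0)) (hg0 : ∀ t > 0, 0 ≤ g t)
    (h : ∀ t > 0, f t ≤ a * g (t / a) + f (2 * t) / 2) :
    sSup (f '' Ioi 0) ≤ 2 * a * sSup (g '' Ioi 0) := by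
  have hg_nonneg : 0 ≤ sSup (g '' Ioi 0) :=
    (hg0 1 one_pos).trans (le_csSup hg (mem_image_of_mem g (mem_Ioi.2 one_pos)))
  by_cases hf : BddAbove (f '' Ioi 0)
  · have : sSup (f '' Ioi 0) ≤ a * sSup (g '' Ioi 0) + sSup (f '' Ioi 0) / 2 := by
      refine csSup_le (nonempty_Ioi.image f) ?_
      rintro _ ⟨t, ht, rfl⟩
      have hgt := le_csSup hg (mem_image_of_mem g (mem_Ioi.2 (div_pos ht ha)))
      have hft := le_csSup hf (mem_image_of_mem f (mem_Ioi.2 (mul_pos two_pos ht)))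
      linarith [h t ht, mul_le_mul_of_nonneg_left hgt ha.le]
    linarith
  · -- an unbounded set of reals has `sSup` equal to `0`
    rw [Real.sSup_of_not_bddAbove hf]
    positivity

theorem statement3_general (n : ℕ) (K : Set (EuclideanSpace ℝ (Fin n)))
    (hKconv : Convex ℝ K) (hKcomp : IsCompact K) (hK0 : 0 ∈ interior K)
    (A B : ℝ → ℝ)
    (hA : ∀ t, A t = t * Real.log (covN K (t • Metric.closedBall (0 : EuclideanSpace ℝ (Fin n)) 1)))
    (hB : ∀ t, B t = t * Real.log (covN (Metric.closedBall (0 : EuclideanSpace ℝ (Fin n)) 1)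
      (t • polarBody K)))
    (hAbdd : BddAbove (A '' Ioi 0)) :
    sSup (B '' Ioi 0) ≤ 16 * sSup (A '' Ioi 0) := by
  have hA_nonneg (t : ℝ) (ht : t > 0) : 0 ≤ A t := by
    rw [hA]
    exact mul_nonneg ht.le (Real.log_natCast_nonneg _)
  have hBA (t : ℝ) (ht : t > 0) : B t ≤ 8 * A (t / 8) + B (2 * t) / 2 := by
    simp only [hA, hB]
    exact mul_log_covN_closedBall_polarBody_le hKconv hKcomp (interior_subset hK0) ht
  calc sSup (B '' Ioi 0) ≤ 2 * 8 * sSup (A '' Ioi 0) :=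
        sSup_image_Ioi_le_of_le_add_half (by norm_num) hAbdd hA_nonneg hBA
    _ = 16 * sSup (A '' Ioi 0) := by norm_num

/-- For a convex body `K` with `0` in its interior, setting
`A(t) = t log N(K, t B₂ⁿ)` and `B(t) = t log N(B₂ⁿ, t K°)`, one has
`sup_{t>0} B(t) ≤ 16 sup_{t>0} A(t)`. -/
theorem statement3 (n : ℕ) (hn : 0 < n) (K : Set (EuclideanSpace ℝ (Fin n)))
    (hKconv : Convex ℝ K) (hKcomp : IsCompact K) (hK0 : 0 ∈ interior K)
    (A B : ℝ → ℝ)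
    (hA : ∀ t, A t = t * Real.log (covN K (t • Metric.closedBall (0 : EuclideanSpace ℝ (Fin n)) 1)))
    (hB : ∀ t, B t = t * Real.log (covN (Metric.closedBall (0 : EuclideanSpace ℝ (Fin n)) 1)
      (t • polarBody K)))
    (hAbdd : BddAbove (A '' Ioi 0)) :
    sSup (B '' Ioi 0) ≤ 16 * sSup (A '' Ioi 0) :=
  statement3_general n K hKconv hKcomp hK0 A B hA hB hAbdd
end

section
/- Let L be a convex body and K a symmetric convex body in R^n with L ⊆ bK for some b ≥ 1. Then |conv(K ∪ L)| ≤ 3enb·N(L,K)·|K|. -/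
open MeasureTheory Set
open scoped Pointwise

/-!
Every point of `conv (K ∪ L)` is `(1 - τ) x + τ y` with `x ∈ K`, `y ∈ L`. Round `τ` down to a
grid point `t = j / M` with `M = n ⌈b⌉`, and write `y = c + k₀` with `c` the centre of a translate
of `K` in an optimal covering of `L`, and `y = b k₁`. Then
`(1 - τ) x + τ y = t c + ((1 - τ) x + t k₀ + (τ - t) b k₁) ∈ t c + (1 + b / M) K`,
so `conv (K ∪ L)` is covered by `M · N(L, K)` translates of `(1 + b / M) K`, each of volume
at most `(1 + 1 / n)ⁿ |K| ≤ e |K|`, and `M ≤ 2 n b`.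
-/

theorem exists_nat_lt_div_le_le {τ : ℝ} (h0 : 0 ≤ τ) (h1 : τ ≤ 1) {M : ℕ} (hM : 0 < M) :
    ∃ j < M, (j : ℝ) / M ≤ τ ∧ τ ≤ j / M + 1 / M := by
  have hMR : (0 : ℝ) < M := by exact_mod_cast hM
  rcases h1.lt_or_eq with h1 | rfl
  · refine ⟨⌊τ * M⌋₊, ?_, ?_, ?_⟩
    · exact (Nat.floor_lt (by positivity)).2 (by nlinarith)
    · rw [div_le_iff₀ hMR]; exact Nat.floor_le (by positivity)
    · rw [← add_div, le_div_iff₀ hMR]; exact (Nat.lt_floor_add_one _).le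
  · refine ⟨M - 1, Nat.sub_lt hM one_pos, ?_, ?_⟩
    · rw [div_le_one hMR]; exact_mod_cast Nat.sub_le M 1
    · rw [← add_div, Nat.cast_pred hM, sub_add_cancel, div_self hMR.ne']

section Convex

variable {E : Type*} [AddCommGroup E] [Module ℝ E]

theorem Convex.zero_mem_interior_of_neg_mem [TopologicalSpace E] [IsTopologicalAddGroup E]
    [ContinuousSMul ℝ E] {K : Set E} (hK : Convex ℝ K) (hK0 : (interior K).Nonempty)
    (hneg : ∀ x ∈ K, -x ∈ K) : (0 : E) ∈ interior K := by
  obtain ⟨x, hx⟩ := hK0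
  have hmid := hK.combo_interior_closure_mem_interior hx
    (subset_closure (hneg x (interior_subset hx))) (by norm_num : (0 : ℝ) < 1 / 2)
    (by norm_num : (0 : ℝ) ≤ 1 / 2) (by norm_num)
  simpa [smul_neg] using hmid

theorem Convex.smul_subset_smul_of_le {K : Set E} (hK : Convex ℝ K) (h0 : (0 : E) ∈ K)
    {s t : ℝ} (hs : 0 ≤ s) (hst : s ≤ t) : s • K ⊆ t • K := by
  rcases (hs.trans hst).eq_or_lt with rfl | ht
  · rw [le_antisymm hst hs]
  rintro _ ⟨x, hx, rfl⟩
  refine ⟨(s / t) • x, hK.smul_mem_of_zero_mem h0 hx ⟨by positivity, (div_le_one ht).2 hst⟩, ?_⟩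
  dsimp only
  rw [smul_smul, mul_div_cancel₀ _ ht.ne']

theorem mem_vadd_smul_of_mem_segment {K : Set E} (hK : Convex ℝ K) (h0 : (0 : E) ∈ K)
    {x y c : E} {α τ t δ b : ℝ} (hx : x ∈ K) (hyc : y ∈ c +ᵥ K) (hyb : y ∈ b • K)
    (hα : 0 ≤ α) (hατ : α + τ = 1) (ht : 0 ≤ t) (htτ : t ≤ τ) (hτt : τ ≤ t + δ) (hb : 0 ≤ b) :
    α • x + τ • y ∈ (t • c) +ᵥ ((1 + b * δ) • K) := by
  obtain ⟨k₀, hk₀, rfl⟩ := hyc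
  obtain ⟨k₁, hk₁, hy⟩ := hyb
  have hsum : α • x + t • k₀ + ((τ - t) * b) • k₁ ∈ (α + t + (τ - t) * b) • K := by
    rw [hK.add_smul (by positivity) (by nlinarith), hK.add_smul hα ht]
    exact add_mem_add (add_mem_add (smul_mem_smul_set hx) (smul_mem_smul_set hk₀))
      (smul_mem_smul_set hk₁)
  refine ⟨_, hK.smul_subset_smul_of_le h0 (by nlinarith) (by nlinarith) hsum, ?_⟩
  dsimp only [vadd_eq_add] at hy ⊢
  calc t • c + (α • x + t • k₀ + ((τ - t) * b) • k₁)
      = α • x + t • (c + k₀) + (τ - t) • (b • k₁) := by module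
    _ = α • x + τ • (c + k₀) := by rw [hy]; module

theorem convexHull_union_subset_iUnion_vadd {K L : Set E} (hK : Convex ℝ K) (h0 : (0 : E) ∈ K)
    (hL : Convex ℝ L) (hLne : L.Nonempty) {b : ℝ} (hb : 0 ≤ b) (hLb : L ⊆ b • K) {F : Finset E}
    (hcov : L ⊆ ⋃ c ∈ F, c +ᵥ K) {M : ℕ} (hM : 0 < M) :
    convexHull ℝ (K ∪ L) ⊆
      ⋃ j ∈ Finset.range M, ⋃ c ∈ F, ((j / M : ℝ) • c) +ᵥ ((1 + b / M) • K) := by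
  rw [hK.convexHull_union hL ⟨0, h0⟩ hLne]
  intro z hz
  obtain ⟨x, hx, y, hy, hz⟩ := mem_convexJoin.1 hz
  rw [segment_eq_image₂] at hz
  obtain ⟨⟨α, τ⟩, ⟨hα, hτ, hατ⟩, rfl⟩ := hz
  obtain ⟨j, hjM, hjτ, hτj⟩ := exists_nat_lt_div_le_le hτ (by linarith) hM
  obtain ⟨c, hcF, hyc⟩ := mem_iUnion₂.1 (hcov hy)
  refine mem_iUnion₂.2 ⟨j, Finset.mem_range.2 hjM, mem_iUnion₂.2 ⟨c, hcF, ?_⟩⟩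
  rw [← mul_one_div b]
  exact mem_vadd_smul_of_mem_segment hK h0 hx hyc (hLb hy) hα hατ (by positivity) hjτ hτj hb

end Convex

theorem exists_finset_card_eq_covN {n : ℕ} {A B : Set (EuclideanSpace ℝ (Fin n))}
    (hA : IsCompact A) (hB : (interior B).Nonempty) :
    ∃ F : Finset (EuclideanSpace ℝ (Fin n)), F.card = covN A B ∧ A ⊆ ⋃ c ∈ F, c +ᵥ B := by
  obtain ⟨p, hp⟩ := hB
  obtain ⟨F, -, hF⟩ := hA.elim_nhds_subcover (fun x => (x - p) +ᵥ interior B)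
    (fun x _ => (isOpen_interior.vadd _).mem_nhds ⟨p, hp, by simp⟩)
  refine Nat.sInf_mem (s := {N | ∃ F : Finset _, F.card = N ∧ A ⊆ ⋃ c ∈ F, c +ᵥ B})
    ⟨_, F.image (· - p), rfl, hF.trans fun y hy => ?_⟩
  obtain ⟨x, hxF, hyx⟩ := mem_iUnion₂.1 hy
  exact mem_iUnion₂.2 ⟨x - p, Finset.mem_image_of_mem _ hxF, vadd_set_mono interior_subset hyx⟩

theorem measure_biUnion_vadd_le {E ι : Type*} [AddGroup E] [MeasurableSpace E]
    [MeasurableAdd E] (μ : Measure E) [μ.IsAddLeftInvariant] (I : Finset ι) (v : ι → E)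
    (s : Set E) : μ (⋃ i ∈ I, v i +ᵥ s) ≤ I.card * μ s :=
  calc μ (⋃ i ∈ I, v i +ᵥ s) ≤ ∑ i ∈ I, μ (v i +ᵥ s) := measure_biUnion_finset_le _ _
    _ = I.card * μ s := by simp [measure_vadd]

theorem measure_convexHull_union_le {E : Type*} [NormedAddCommGroup E] [NormedSpace ℝ E]
    [MeasurableSpace E] [BorelSpace E] [FiniteDimensional ℝ E] (μ : Measure E)
    [μ.IsAddHaarMeasure] {K L : Set E} (hK : Convex ℝ K) (h0 : (0 : E) ∈ K) (hL : Convex ℝ L)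
    (hLne : L.Nonempty) {b : ℝ} (hb : 0 ≤ b) (hLb : L ⊆ b • K) {F : Finset E}
    (hcov : L ⊆ ⋃ c ∈ F, c +ᵥ K) {M : ℕ} (hM : 0 < M) :
    μ (convexHull ℝ (K ∪ L)) ≤
      M * F.card * (ENNReal.ofReal ((1 + b / M) ^ Module.finrank ℝ E) * μ K) :=
  calc μ (convexHull ℝ (K ∪ L))
      ≤ μ (⋃ j ∈ Finset.range M, ⋃ c ∈ F, ((j / M : ℝ) • c) +ᵥ ((1 + b / M) • K)) :=
        measure_mono (convexHull_union_subset_iUnion_vadd hK h0 hL hLne hb hLb hcov hM)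
    _ ≤ ∑ j ∈ Finset.range M, μ (⋃ c ∈ F, ((j / M : ℝ) • c) +ᵥ ((1 + b / M) • K)) :=
        measure_biUnion_finset_le _ _
    _ ≤ ∑ j ∈ Finset.range M, F.card * μ ((1 + b / M) • K) :=
        Finset.sum_le_sum fun j _ => measure_biUnion_vadd_le μ F _ _
    _ = M * F.card * (ENNReal.ofReal ((1 + b / M) ^ Module.finrank ℝ E) * μ K) := by
        rw [Finset.sum_const, Finset.card_range, nsmul_eq_mul, Measure.addHaar_smul,
          abs_of_nonneg (by positivity), mul_assoc]

theorem natCast_mul_ceil_le_two_mul (n : ℕ) {b : ℝ} (hb : 1 ≤ b) :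
    ((n * ⌈b⌉₊ : ℕ) : ℝ) ≤ 2 * n * b := by
  have := Nat.ceil_le_two_mul (a := b) (by linarith)
  push_cast
  nlinarith [(n.cast_nonneg : (0 : ℝ) ≤ n)]

theorem one_add_div_mul_ceil_pow_le_exp {n : ℕ} (hn : 0 < n) {b : ℝ} (hb : 0 < b) :
    (1 + b / ((n * ⌈b⌉₊ : ℕ) : ℝ)) ^ n ≤ Real.exp 1 := by
  have hnR : (0 : ℝ) < n := by exact_mod_cast hn
  have hbc : b ≤ ⌈b⌉₊ := Nat.le_ceil b
  have hle : b / ((n * ⌈b⌉₊ : ℕ) : ℝ) ≤ (n : ℝ)⁻¹ := by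
    push_cast
    rw [div_le_iff₀ (by positivity)]
    field_simp
    exact hbc
  calc (1 + b / ((n * ⌈b⌉₊ : ℕ) : ℝ)) ^ n ≤ (1 + (n : ℝ)⁻¹) ^ n := by gcongr
    _ ≤ Real.exp 1 := Real.one_add_inv_pow_le_exp

/-- If `L` is a convex body and `K` a symmetric convex body in ℝⁿ with
`L ⊆ bK` for some `b ≥ 1`, then `|conv(K ∪ L)| ≤ 3 e n b · N(L,K) · |K|`. -/
theorem statement5 (n : ℕ) (hn : 0 < n) (K L : Set (EuclideanSpace ℝ (Fin n)))
    (hKconv : Convex ℝ K) (hKcomp : IsCompact K) (hK0 : (interior K).Nonempty)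
    (hKsymm : ∀ x ∈ K, -x ∈ K)
    (hLconv : Convex ℝ L) (hLcomp : IsCompact L) (hL0 : (interior L).Nonempty)
    (b : ℝ) (hb : 1 ≤ b) (hLK : L ⊆ b • K) :
    (volume (convexHull ℝ (K ∪ L))).toReal ≤
      3 * Real.exp 1 * n * b * (covN L K) * (volume K).toReal := by
  have h0 := hKconv.zero_mem_interior_of_neg_mem hK0 hKsymm
  obtain ⟨F, hF, hcov⟩ := exists_finset_card_eq_covN hLcomp ⟨0, h0⟩
  have hb0 : 0 < b := by linarith
  have hM : 0 < n * ⌈b⌉₊ := Nat.mul_pos hn (Nat.ceil_pos.2 hb0)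
  have hvol := measure_convexHull_union_le volume hKconv (interior_subset h0) hLconv
    (hL0.mono interior_subset) hb0.le hLK hcov hM
  rw [finrank_euclideanSpace_fin, hF] at hvol
  calc (volume (convexHull ℝ (K ∪ L))).toReal
      ≤ (n * ⌈b⌉₊ : ℕ) * covN L K * ((1 + b / (n * ⌈b⌉₊ : ℕ)) ^ n * (volume K).toReal) := by
        have hfin := hKcomp.measure_lt_top (μ := volume)
        convert ENNReal.toReal_mono (by finiteness) hvol using 1
        rw [ENNReal.toReal_mul, ENNReal.toReal_mul, ENNReal.toReal_mul, ENNReal.toReal_natCast,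
          ENNReal.toReal_natCast, ENNReal.toReal_ofReal (by positivity)]
    _ ≤ (2 * n * b) * covN L K * (Real.exp 1 * (volume K).toReal) := by
        gcongr
        · exact natCast_mul_ceil_le_two_mul n hb
        · exact one_add_div_mul_ceil_pow_le_exp hn hb0
    _ ≤ 3 * Real.exp 1 * n * b * (covN L K) * (volume K).toReal := by
        have : 0 ≤ n * b * covN L K * Real.exp 1 * (volume K).toReal := by positivity
        nlinarith
end

section
/- Let K and L be convex bodies in R^n, with L not necessarily symmetric. Then N(K,L) ≤ 4^n · |K+L|/|L|. -/
/-
Averaging `x ↦ |L ∩ (x - L)|`, whose integral is `|L|²` and which vanishes off `L + L = 2L`,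
gives a point `v` with `|L| ≤ 2ⁿ |S|` for `S = L ∩ (v - L)`, a convex body symmetric about
`v / 2`. Then `H = S / 2` has `|S| = 2ⁿ |H|`, and `H - H ⊆ L - v / 2`, `H ⊆ L - v / 4`.
A maximal family of pairwise disjoint translates `x + H` with `x ∈ K` has at most
`|K + H| / |H| ≤ |K + L| / |H|` members, and by maximality the translates `x + (H - H)` cover `K`.
-/

open MeasureTheory Set
open scoped Pointwise

open Module
open scoped ENNReal

theorem disjoint_vadd_vadd_of_notMem_vadd_sub {G : Type*} [AddCommGroup G] {H : Set G} {x y : G}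
    (h : y ∉ x +ᵥ (H - H)) : Disjoint (y +ᵥ H) (x +ᵥ H) := by
  rw [Set.disjoint_left]
  rintro _ ⟨a, ha, rfl⟩ ⟨b, hb, hxy⟩
  refine h ⟨b - a, sub_mem_sub hb ha, ?_⟩
  simp only [vadd_eq_add] at hxy ⊢
  rw [← add_sub_assoc, hxy, add_sub_cancel_right]

theorem lintegral_measure_inter_preimage_sub {G : Type*} [MeasurableSpace G] [AddGroup G]
    [MeasurableAdd₂ G] [MeasurableNeg G] (μ : Measure G) [SFinite μ] [μ.IsAddRightInvariant]
    {s t : Set G} (hs : MeasurableSet s) (ht : MeasurableSet t) :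
    ∫⁻ x, μ (s ∩ (x - ·) ⁻¹' t) ∂μ = μ s * μ t := by
  set D := {p : G × G | p.2 ∈ s ∧ p.1 - p.2 ∈ t}
  have hD : MeasurableSet D := (measurable_snd hs).inter (measurable_fst.sub measurable_snd ht)
  have hslice (y : G) : μ ((·, y) ⁻¹' D) = s.indicator (fun _ ↦ μ t) y := by
    by_cases hy : y ∈ s
    · have hpre : (·, y) ⁻¹' D = (· + -y) ⁻¹' t := by
        ext x; simp [D, hy, sub_eq_add_neg]
      rw [hpre, measure_preimage_add_right, indicator_of_mem hy]
    · simp [D, hy]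
  calc ∫⁻ x, μ (s ∩ (x - ·) ⁻¹' t) ∂μ = μ.prod μ D := (Measure.prod_apply hD).symm
    _ = μ s * μ t := by
      rw [Measure.prod_apply_symm hD]
      simp only [hslice, lintegral_indicator_const hs, mul_comm]

section Packing

variable {G : Type*} [MeasurableSpace G] [AddCommGroup G] [MeasurableAdd G] {μ : Measure G}
  [μ.IsAddLeftInvariant]

theorem card_mul_measure_le_measure_add {K H : Set G} (hH : MeasurableSet H) {F : Finset G}
    (hFK : ↑F ⊆ K) (hF : (F : Set G).PairwiseDisjoint (· +ᵥ H)) :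
    F.card * μ H ≤ μ (K + H) :=
  calc F.card * μ H = ∑ x ∈ F, μ (x +ᵥ H) := by simp [measure_vadd]
    _ = μ (⋃ x ∈ F, x +ᵥ H) := (measure_biUnion_finset hF fun x _ ↦ hH.const_vadd x).symm
    _ ≤ μ (K + H) := measure_mono <| iUnion₂_subset fun _ hx ↦ vadd_set_subset_add (hFK hx)

theorem exists_finset_subset_iUnion_vadd_sub_and_card_mul_le (K : Set G) {H : Set G}
    (hH : MeasurableSet H) (hH0 : μ H ≠ 0) (hKH : μ (K + H) ≠ ∞) :
    ∃ F : Finset G, K ⊆ ⋃ x ∈ F, x +ᵥ (H - H) ∧ F.card * μ H ≤ μ (K + H) := by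
  classical
  set P := {F : Finset G | ↑F ⊆ K ∧ (F : Set G).PairwiseDisjoint (· +ᵥ H)}
  obtain ⟨N, hN⟩ := ENNReal.exists_nat_gt (ENNReal.div_lt_top hKH hH0).ne
  have hbdd : BddAbove (Finset.card '' P) := by
    refine ⟨N, ?_⟩
    rintro _ ⟨F, hF, rfl⟩
    have hF_le := (ENNReal.le_div_iff_mul_le (.inl hH0) (.inr hKH)).2
      (card_mul_measure_le_measure_add hH hF.1 hF.2)
    exact_mod_cast (hF_le.trans_lt hN).le
  obtain ⟨F, ⟨hFK, hFdisj⟩, hFmax⟩ :=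
    Nat.sSup_mem (s := Finset.card '' P) ⟨0, ∅, by simp [P], rfl⟩ hbdd
  refine ⟨F, fun y hy ↦ ?_, card_mul_measure_le_measure_add hH hFK hFdisj⟩
  by_contra hyF
  simp only [mem_iUnion, not_exists] at hyF
  have hy_notMem : y ∉ F := by
    obtain ⟨h, hh⟩ := nonempty_of_measure_ne_zero hH0
    exact fun hyF' ↦ hyF y hyF' ⟨0, ⟨h, hh, h, hh, sub_self h⟩, by simp⟩
  have hins : insert y F ∈ P := by
    refine ⟨by simpa using insert_subset hy hFK, ?_⟩
    rw [Finset.coe_insert]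
    exact hFdisj.insert fun x hx _ ↦ disjoint_vadd_vadd_of_notMem_vadd_sub (hyF x hx)
  have := le_csSup hbdd ⟨_, hins, rfl⟩
  rw [Finset.card_insert_of_notMem hy_notMem, ← hFmax] at this
  omega

end Packing

section Convex

variable {E : Type*} [AddCommGroup E] [Module ℝ E]

theorem Convex.add_self_eq_two_smul {L : Set E} (hL : Convex ℝ L) : L + L = (2 : ℝ) • L := by
  rw [← one_add_one_eq_two, hL.add_smul zero_le_one zero_le_one, one_smul]

theorem Convex.preimage_sub_left {L : Set E} (hL : Convex ℝ L) (v : E) :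
    Convex ℝ ((v - ·) ⁻¹' L) := by
  intro x hx y hy a b ha hb hab
  show v - (a • x + b • y) ∈ L
  convert hL hx hy ha hb hab using 1
  obtain rfl : b = 1 - a := by linarith
  module

variable {S : Set E} {v : E}

theorem Convex.inv_two_smul_sub_inv_two_smul_subset (hS : Convex ℝ S)
    (hsymm : ∀ s ∈ S, v - s ∈ S) :
    (2⁻¹ : ℝ) • S - (2⁻¹ : ℝ) • S ⊆ -((2⁻¹ : ℝ) • v) +ᵥ S := by
  rintro _ ⟨_, ⟨a, ha, rfl⟩, _, ⟨b, hb, rfl⟩, rfl⟩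
  refine ⟨(2⁻¹ : ℝ) • a + (2⁻¹ : ℝ) • (v - b),
    hS ha (hsymm b hb) (by norm_num) (by norm_num) (by norm_num), ?_⟩
  simp only [vadd_eq_add]
  module

theorem Convex.inv_two_smul_subset (hS : Convex ℝ S) (hsymm : ∀ s ∈ S, v - s ∈ S) :
    (2⁻¹ : ℝ) • S ⊆ -((4⁻¹ : ℝ) • v) +ᵥ S := by
  rintro _ ⟨a, ha, rfl⟩
  refine ⟨(3 / 4 : ℝ) • a + (4⁻¹ : ℝ) • (v - a),
    hS ha (hsymm a ha) (by norm_num) (by norm_num) (by norm_num), ?_⟩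
  simp only [vadd_eq_add]
  module

end Convex

section AddHaar

variable {E : Type*} [NormedAddCommGroup E] [NormedSpace ℝ E] [FiniteDimensional ℝ E]
  [MeasurableSpace E] [BorelSpace E] (μ : Measure E) [μ.IsAddHaarMeasure] {L : Set E}

theorem addHaar_two_smul (s : Set E) : μ ((2 : ℝ) • s) = 2 ^ finrank ℝ E * μ s := by
  rw [Measure.addHaar_smul, abs_of_nonneg (by positivity), ENNReal.ofReal_pow zero_le_two,
    ENNReal.ofReal_ofNat]

theorem Convex.addHaar_add_self (hL : Convex ℝ L) : μ (L + L) = 2 ^ finrank ℝ E * μ L := by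
  rw [hL.add_self_eq_two_smul, addHaar_two_smul]

theorem Convex.exists_addHaar_le_two_pow_mul_addHaar_inter (hL : Convex ℝ L)
    (hLm : MeasurableSet L) (hLfin : μ L ≠ ∞) :
    ∃ v, μ L ≤ 2 ^ finrank ℝ E * μ (L ∩ (v - ·) ⁻¹' L) := by
  rcases eq_or_ne (μ L) 0 with h0 | h0
  · exact ⟨0, by simp [h0]⟩
  have hsupp : Function.support (fun x ↦ μ (L ∩ (x - ·) ⁻¹' L)) ⊆ L + L := by
    intro x hx
    obtain ⟨y, hy, hxy⟩ := nonempty_of_measure_ne_zero hx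
    simpa using add_mem_add hy (show x - y ∈ L from hxy)
  have hint : ∫⁻ x in L + L, μ (L ∩ (x - ·) ⁻¹' L) ∂μ = μ L * μ L := by
    rw [setLIntegral_eq_of_support_subset hsupp, lintegral_measure_inter_preimage_sub μ hLm hLm]
  have hLLm : MeasurableSet (L + L) := hL.add_self_eq_two_smul ▸ hLm.const_smul₀ 2
  have h2d : (2 : ℝ≥0∞) ^ finrank ℝ E ≠ 0 := pow_ne_zero _ two_ne_zero
  have hLL0 : μ (L + L) ≠ 0 := by
    rw [hL.addHaar_add_self μ]
    exact mul_ne_zero h2d h0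
  obtain ⟨v, -, hv⟩ := exists_setLAverage_le hLL0 hLLm.nullMeasurableSet
    (hint ▸ ENNReal.mul_ne_top hLfin hLfin)
  refine ⟨v, ?_⟩
  rwa [setLAverage_eq, hint, hL.addHaar_add_self μ, ENNReal.mul_div_mul_right _ _ h0 hLfin,
    ENNReal.div_le_iff h2d (by simp), mul_comm] at hv

theorem Convex.exists_sub_subset_vadd_and_addHaar_le_four_pow_mul (hL : Convex ℝ L)
    (hLm : MeasurableSet L) (hLfin : μ L ≠ ∞) :
    ∃ (H : Set E) (w w' : E), MeasurableSet H ∧ H - H ⊆ w +ᵥ L ∧ H ⊆ w' +ᵥ L ∧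
      μ L ≤ 4 ^ finrank ℝ E * μ H := by
  obtain ⟨v, hv⟩ := hL.exists_addHaar_le_two_pow_mul_addHaar_inter μ hLm hLfin
  set S := L ∩ (v - ·) ⁻¹' L
  have hS : Convex ℝ S := hL.inter (hL.preimage_sub_left v)
  have hsymm : ∀ s ∈ S, v - s ∈ S := fun s ⟨hs, hvs⟩ ↦ ⟨hvs, by simpa using hs⟩
  have hSL : S ⊆ L := inter_subset_left
  refine ⟨(2⁻¹ : ℝ) • S, -((2⁻¹ : ℝ) • v), -((4⁻¹ : ℝ) • v),
    (hLm.inter (hLm.preimage (measurable_const.sub measurable_id))).const_smul₀ _,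
    (hS.inv_two_smul_sub_inv_two_smul_subset hsymm).trans (vadd_set_mono hSL),
    (hS.inv_two_smul_subset hsymm).trans (vadd_set_mono hSL), ?_⟩
  have hSH : S = (2 : ℝ) • (2⁻¹ : ℝ) • S := by rw [smul_smul]; norm_num
  calc μ L ≤ 2 ^ finrank ℝ E * μ S := hv
    _ = 2 ^ finrank ℝ E * (2 ^ finrank ℝ E * μ ((2⁻¹ : ℝ) • S)) := by
      rw [← addHaar_two_smul μ ((2⁻¹ : ℝ) • S), ← hSH]
    _ = 4 ^ finrank ℝ E * μ ((2⁻¹ : ℝ) • S) := by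
      rw [← mul_assoc, ← mul_pow]; norm_num

end AddHaar

theorem covN_le_card_of_subset_iUnion_vadd {n : ℕ} {A B B' : Set (EuclideanSpace ℝ (Fin n))}
    {w : EuclideanSpace ℝ (Fin n)} (hB : B' ⊆ w +ᵥ B)
    {F : Finset (EuclideanSpace ℝ (Fin n))} (hA : A ⊆ ⋃ c ∈ F, c +ᵥ B') : covN A B ≤ F.card := by
  classical
  refine (Nat.sInf_le ⟨F.image (· + w), rfl, fun y hy ↦ ?_⟩ : covN A B ≤ _).trans
    Finset.card_image_le
  obtain ⟨c, hc, hyc⟩ := mem_iUnion₂.1 (hA hy)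
  refine mem_iUnion₂.2 ⟨c + w, Finset.mem_image_of_mem _ hc, ?_⟩
  rw [← vadd_vadd]
  exact vadd_set_mono hB hyc

theorem statement7_general (n : ℕ) (K L : Set (EuclideanSpace ℝ (Fin n))) (hKcomp : IsCompact K)
    (hLconv : Convex ℝ L) (hLcomp : IsCompact L) (hL0 : (interior L).Nonempty) :
    (covN K L : ℝ) ≤ 4 ^ n * (volume (K + L)).toReal / (volume L).toReal := by
  have hLpos : volume L ≠ 0 := (Measure.measure_pos_of_nonempty_interior _ hL0).ne'
  have hLfin : volume L ≠ ∞ := hLcomp.measure_lt_top.ne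
  have hKL : volume (K + L) ≠ ∞ := (hKcomp.add hLcomp).measure_lt_top.ne
  obtain ⟨H, w, w', hHm, hHH, hHL, hLH⟩ :=
    hLconv.exists_sub_subset_vadd_and_addHaar_le_four_pow_mul volume hLcomp.measurableSet hLfin
  rw [finrank_euclideanSpace_fin] at hLH
  have hKH : volume (K + H) ≤ volume (K + L) :=
    calc volume (K + H) ≤ volume (K + (w' +ᵥ L)) := measure_mono (add_subset_add_left hHL)
      _ = volume (K + L) := by rw [add_vadd_comm, measure_vadd]
  have hH0 : volume H ≠ 0 := fun h ↦ hLpos (le_antisymm (by simpa [h] using hLH) bot_le)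
  obtain ⟨F, hKF, hF⟩ :=
    exists_finset_subset_iUnion_vadd_sub_and_card_mul_le K hHm hH0 (ne_top_of_le_ne_top hKL hKH)
  have hcovN : (covN K L : ℝ≥0∞) * volume L ≤ 4 ^ n * volume (K + L) :=
    calc (covN K L : ℝ≥0∞) * volume L ≤ F.card * (4 ^ n * volume H) := by
          gcongr
          exact_mod_cast covN_le_card_of_subset_iUnion_vadd hHH hKF
      _ = 4 ^ n * (F.card * volume H) := by ring
      _ ≤ 4 ^ n * volume (K + L) := by gcongr; exact hF.trans hKH
  rw [le_div_iff₀ (ENNReal.toReal_pos hLpos hLfin)]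
  simpa [ENNReal.toReal_mul] using ENNReal.toReal_mono (by finiteness) hcovN

/-- For convex bodies `K, L` in ℝⁿ (`L` not necessarily symmetric),
`N(K, L) ≤ 4ⁿ |K+L| / |L|`. -/
theorem statement7 (n : ℕ) (hn : 0 < n) (K L : Set (EuclideanSpace ℝ (Fin n)))
    (hKconv : Convex ℝ K) (hKcomp : IsCompact K) (hK0 : (interior K).Nonempty)
    (hLconv : Convex ℝ L) (hLcomp : IsCompact L) (hL0 : (interior L).Nonempty) :
    (covN K L : ℝ) ≤ 4 ^ n * (volume (K + L)).toReal / (volume L).toReal :=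
  statement7_general n K L hKcomp hLconv hLcomp hL0
end

section
/- Let K₁, K₂ be centered convex bodies in R^n each admitting an M-ellipsoid: there exist ellipsoids E_i with |E_i| = |K_i| and |K_i + T|^{1/n} ≍ |E_i + T|^{1/n} (up to an absolute constant factor) for all convex bodies T. If moreover each E_i is a ball r_i B_2^n, then for all t₁, t₂ > 0, |t₁K₁ + t₂K₂|^{1/n} ≤ C(t₁|K₁|^{1/n} + t₂|K₂|^{1/n}) for an absolute constant C. -/
/-!
Scaling reduces `t₁K₁ + t₂K₂` to `t₁(K₁ + (t₂/t₁)K₂)`, so the comparison of `K₁` with its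
M-ball `r₁B` may be applied with the convex body `T = (t₂/t₁)K₂`; this replaces `K₁` by `r₁B`
at the cost of a factor `c`. Doing the same for `K₂` (with `T` a multiple of the ball) leaves
`t₁r₁B + t₂r₂B = (t₁r₁ + t₂r₂)B`, whose normalized volume is `t₁|K₁|^{1/n} + t₂|K₂|^{1/n}`
because `|rᵢB| = |Kᵢ|`.
-/

open MeasureTheory Module
open scoped Pointwise

variable {E : Type*} [NormedAddCommGroup E] [NormedSpace ℝ E]

def IsConvexBody (T : Set E) : Prop :=
  Convex ℝ T ∧ IsCompact T ∧ (interior T).Nonempty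

theorem IsConvexBody.smul {T : Set E} (hT : IsConvexBody T) {a : ℝ} (ha : a ≠ 0) :
    IsConvexBody (a • T) :=
  ⟨hT.1.smul a, hT.2.1.smul a, by rw [interior_smul₀ ha]; exact hT.2.2.smul_set⟩

theorem isConvexBody_closedBall [FiniteDimensional ℝ E] (x : E) {r : ℝ} (hr : 0 < r) :
    IsConvexBody (Metric.closedBall x r) :=
  ⟨convex_closedBall x r, isCompact_closedBall x r,
    ⟨x, Metric.ball_subset_interior_closedBall (Metric.mem_ball_self hr)⟩⟩

variable [FiniteDimensional ℝ E] [MeasurableSpace E] [BorelSpace E]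
  (μ : Measure E) [μ.IsAddHaarMeasure] {n : ℕ}

theorem toReal_addHaar_smul_rpow (hn : finrank ℝ E = n) (hn0 : n ≠ 0) {t : ℝ} (ht : 0 ≤ t)
    (S : Set E) :
    (μ (t • S)).toReal ^ ((1 : ℝ) / n) = t * (μ S).toReal ^ ((1 : ℝ) / n) := by
  rw [Measure.addHaar_smul, ENNReal.toReal_mul, ENNReal.toReal_ofReal (abs_nonneg _), hn,
    abs_of_nonneg (pow_nonneg ht n), Real.mul_rpow (pow_nonneg ht n) ENNReal.toReal_nonneg,
    one_div, Real.pow_rpow_inv_natCast ht hn0]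

theorem toReal_addHaar_smul_add_smul_rpow_le (hn : finrank ℝ E = n) (hn0 : n ≠ 0) {c : ℝ}
    {K M L : Set E}
    (hKM : ∀ T, IsConvexBody T →
      (μ (K + T)).toReal ^ ((1 : ℝ) / n) ≤ c * (μ (M + T)).toReal ^ ((1 : ℝ) / n))
    (hL : IsConvexBody L) {t₁ t₂ : ℝ} (ht₁ : 0 < t₁) (ht₂ : 0 < t₂) :
    (μ (t₁ • K + t₂ • L)).toReal ^ ((1 : ℝ) / n) ≤
      c * (μ (t₁ • M + t₂ • L)).toReal ^ ((1 : ℝ) / n) := by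
  have hsplit : ∀ S : Set E, t₁ • S + t₂ • L = t₁ • (S + (t₂ / t₁) • L) := fun S => by
    rw [smul_add, smul_smul, mul_div_cancel₀ t₂ ht₁.ne']
  rw [hsplit, hsplit, toReal_addHaar_smul_rpow μ hn hn0 ht₁.le,
    toReal_addHaar_smul_rpow μ hn hn0 ht₁.le, mul_left_comm]
  exact mul_le_mul_of_nonneg_left (hKM _ (hL.smul (div_pos ht₂ ht₁).ne')) ht₁.le

theorem toReal_addHaar_smul_add_smul_rpow_le_of_smul_convexBody (hn : finrank ℝ E = n)
    (hn0 : n ≠ 0) {c : ℝ} (hc : 0 ≤ c) {B K₁ K₂ : Set E} (hB : IsConvexBody B)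
    (hK₂ : IsConvexBody K₂) {r₁ r₂ : ℝ} (hr₁ : 0 < r₁) (hr₂ : 0 < r₂)
    (hvol₁ : μ (r₁ • B) = μ K₁) (hvol₂ : μ (r₂ • B) = μ K₂)
    (hK₁B : ∀ T, IsConvexBody T →
      (μ (K₁ + T)).toReal ^ ((1 : ℝ) / n) ≤ c * (μ (r₁ • B + T)).toReal ^ ((1 : ℝ) / n))
    (hK₂B : ∀ T, IsConvexBody T →
      (μ (K₂ + T)).toReal ^ ((1 : ℝ) / n) ≤ c * (μ (r₂ • B + T)).toReal ^ ((1 : ℝ) / n))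
    {t₁ t₂ : ℝ} (ht₁ : 0 < t₁) (ht₂ : 0 < t₂) :
    (μ (t₁ • K₁ + t₂ • K₂)).toReal ^ ((1 : ℝ) / n) ≤
      c ^ 2 * (t₁ * (μ K₁).toReal ^ ((1 : ℝ) / n) + t₂ * (μ K₂).toReal ^ ((1 : ℝ) / n)) := by
  have hballs : t₁ • (r₁ • B) + t₂ • (r₂ • B) = (t₁ * r₁ + t₂ * r₂) • B := by
    rw [smul_smul, smul_smul, hB.1.add_smul (by positivity) (by positivity)]
  have hreplace₁ := toReal_addHaar_smul_add_smul_rpow_le μ hn hn0 hK₁B hK₂ ht₁ ht₂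
  have hreplace₂ := toReal_addHaar_smul_add_smul_rpow_le μ hn hn0 hK₂B (hB.smul hr₁.ne') ht₂ ht₁
  rw [add_comm (t₂ • K₂), add_comm (t₂ • r₂ • B), hballs] at hreplace₂
  calc (μ (t₁ • K₁ + t₂ • K₂)).toReal ^ ((1 : ℝ) / n)
      ≤ c * (c * (μ ((t₁ * r₁ + t₂ * r₂) • B)).toReal ^ ((1 : ℝ) / n)) :=
        hreplace₁.trans (mul_le_mul_of_nonneg_left hreplace₂ hc)
    _ = c ^ 2 * (t₁ * (μ (r₁ • B)).toReal ^ ((1 : ℝ) / n) +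
          t₂ * (μ (r₂ • B)).toReal ^ ((1 : ℝ) / n)) := by
        rw [toReal_addHaar_smul_rpow μ hn hn0 (by positivity),
          toReal_addHaar_smul_rpow μ hn hn0 hr₁.le, toReal_addHaar_smul_rpow μ hn hn0 hr₂.le]
        ring
    _ = _ := by rw [hvol₁, hvol₂]

/-- If `K₁, K₂` are centered convex bodies in ℝⁿ whose `M`-ellipsoids can be
taken to be Euclidean balls `rᵢB₂ⁿ` (with `|rᵢB₂ⁿ| = |Kᵢ|` and
`|Kᵢ + T|^{1/n} ≍ |rᵢB₂ⁿ + T|^{1/n}` up to the factor `c` for all convex bodies `T`),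
then for all `t₁, t₂ > 0`,
`|t₁K₁ + t₂K₂|^{1/n} ≤ C (t₁|K₁|^{1/n} + t₂|K₂|^{1/n})` with `C` depending only on `c`. -/
theorem statement18 (c : ℝ) (hc : 1 ≤ c) :
    ∃ C : ℝ, 0 < C ∧
      ∀ (n : ℕ), 0 < n → ∀ (K₁ K₂ : Set (EuclideanSpace ℝ (Fin n))) (r₁ r₂ : ℝ),
        Convex ℝ K₁ → IsCompact K₁ → (interior K₁).Nonempty →
        (∀ θ : EuclideanSpace ℝ (Fin n), (∫ x in K₁, (inner ℝ x θ : ℝ)) = 0) →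
        Convex ℝ K₂ → IsCompact K₂ → (interior K₂).Nonempty →
        (∀ θ : EuclideanSpace ℝ (Fin n), (∫ x in K₂, (inner ℝ x θ : ℝ)) = 0) →
        0 < r₁ → 0 < r₂ →
        volume (r₁ • Metric.closedBall (0 : EuclideanSpace ℝ (Fin n)) 1) = volume K₁ →
        volume (r₂ • Metric.closedBall (0 : EuclideanSpace ℝ (Fin n)) 1) = volume K₂ →
        (∀ T : Set (EuclideanSpace ℝ (Fin n)), Convex ℝ T → IsCompact T →
          (interior T).Nonempty →
          c⁻¹ * (volume (r₁ • Metric.closedBall (0 : EuclideanSpace ℝ (Fin n)) 1 + T)).toReal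
              ^ ((1 : ℝ) / n) ≤
            (volume (K₁ + T)).toReal ^ ((1 : ℝ) / n) ∧
          (volume (K₁ + T)).toReal ^ ((1 : ℝ) / n) ≤
            c * (volume (r₁ • Metric.closedBall (0 : EuclideanSpace ℝ (Fin n)) 1 + T)).toReal
              ^ ((1 : ℝ) / n)) →
        (∀ T : Set (EuclideanSpace ℝ (Fin n)), Convex ℝ T → IsCompact T →
          (interior T).Nonempty →
          c⁻¹ * (volume (r₂ • Metric.closedBall (0 : EuclideanSpace ℝ (Fin n)) 1 + T)).toReal
              ^ ((1 : ℝ) / n) ≤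
            (volume (K₂ + T)).toReal ^ ((1 : ℝ) / n) ∧
          (volume (K₂ + T)).toReal ^ ((1 : ℝ) / n) ≤
            c * (volume (r₂ • Metric.closedBall (0 : EuclideanSpace ℝ (Fin n)) 1 + T)).toReal
              ^ ((1 : ℝ) / n)) →
        ∀ t₁ t₂ : ℝ, 0 < t₁ → 0 < t₂ →
          (volume (t₁ • K₁ + t₂ • K₂)).toReal ^ ((1 : ℝ) / n) ≤
            C * (t₁ * (volume K₁).toReal ^ ((1 : ℝ) / n) +
              t₂ * (volume K₂).toReal ^ ((1 : ℝ) / n)) := by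
  refine ⟨c ^ 2, by positivity, ?_⟩
  intro n hn K₁ K₂ r₁ r₂ _ _ _ _ hK₂conv hK₂comp hK₂int _ hr₁ hr₂ hvol₁ hvol₂ hM₁ hM₂
    t₁ t₂ ht₁ ht₂
  exact toReal_addHaar_smul_add_smul_rpow_le_of_smul_convexBody volume
    finrank_euclideanSpace_fin hn.ne' (by positivity)
    (isConvexBody_closedBall 0 one_pos) ⟨hK₂conv, hK₂comp, hK₂int⟩ hr₁ hr₂ hvol₁ hvol₂
    (fun T hT => (hM₁ T hT.1 hT.2.1 hT.2.2).2) (fun T hT => (hM₂ T hT.1 hT.2.1 hT.2.2).2)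
    ht₁ ht₂
end
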